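/- arXiv:1503.00298 — 2 statements merged into one kernel-verified Lean document; each statement's English description precedes it below -/
import Mathlib

section
/- Let X be a normed space, ρ : G → GL(X) a representation, (g_k) a sequence in G, and define for f ∈ X the quantity ‖f‖_* = max(‖f‖, sup_{j≥0} 2^{-j-1} sup_{k_0,…,k_j ≥ 0} ‖∏_{i=0}^{j}(ρ(g_{k_i}) − Id)f‖) (allowing value +∞). Then on the subspace X_* = {f : ‖f‖_* < ∞}, ‖·‖_* is a norm and every operator ρ(g_p) satisfies ‖ρ(g_p)f‖_* ≤ 3‖f‖_* for all f ∈ X_* and all p ≥ 0. -/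
/-!
Write `D_i = ∏ (ρ(g_{k_i}) − 1)` for an index tuple `i = (j, k_0, …, k_j)`. Appending `p` to the
tuple gives `D_{i,p} = D_i (ρ(g_p) − 1)`, so from `ρ(g_p) = (ρ(g_p) − 1) + 1` we get
`‖D_i ρ(g_p) f‖ ≤ ‖D_{i,p} f‖ + ‖D_i f‖`. The extra factor `2` in the weight of the longer
tuple turns this into `2⁻¹^{j+1} ‖D_i ρ(g_p) f‖ ≤ 2 ‖f‖_* + ‖f‖_*`. Likewise the one-entry tuple
`(p)` gives `‖(ρ(g_p) − 1) f‖ ≤ 2 ‖f‖_*`, hence `‖ρ(g_p) f‖ ≤ 3 ‖f‖_*`. The norm axioms hold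
termwise.
-/

/-- The family (indexed by a tuple `(j, k_0, …, k_j)`) of quantities
`2^{-j-1} ‖∏_{i=0}^{j} (ρ(g_{k_i}) − Id) f‖` entering the definition of `‖f‖_*`. -/
noncomputable def starSeq {G X : Type*} [CommGroup G] [NormedAddCommGroup X]
    [NormedSpace ℂ X] (ρ : G →* (X →L[ℂ] X)) (g : ℕ → G) (f : X) :
    (Σ j : ℕ, Fin (j + 1) → ℕ) → ℝ :=
  fun i => (2 : ℝ)⁻¹ ^ (i.1 + 1) *
    ‖(List.ofFn fun t : Fin (i.1 + 1) => ρ (g (i.2 t)) - 1).prod f‖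

/-- The renormed quantity
`‖f‖_* = max(‖f‖, sup_{j, k_0,…,k_j} 2^{-j-1} ‖∏ (ρ(g_{k_i}) − Id) f‖)`. -/
noncomputable def starNorm {G X : Type*} [CommGroup G] [NormedAddCommGroup X]
    [NormedSpace ℂ X] (ρ : G →* (X →L[ℂ] X)) (g : ℕ → G) (f : X) : ℝ :=
  max ‖f‖ (⨆ i, starSeq ρ g f i)

abbrev StarIndex := Σ j : ℕ, Fin (j + 1) → ℕ

instance : Nonempty StarIndex := ⟨⟨0, fun _ => 0⟩⟩

def StarIndex.snoc (i : StarIndex) (p : ℕ) : StarIndex := ⟨i.1 + 1, Fin.snoc i.2 p⟩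

section StarNorm

variable {G X : Type*} [CommGroup G] [NormedAddCommGroup X] [NormedSpace ℂ X]
  (ρ : G →* (X →L[ℂ] X)) (g : ℕ → G)

noncomputable def diffProd (i : StarIndex) : X →L[ℂ] X :=
  (List.ofFn fun t : Fin (i.1 + 1) => ρ (g (i.2 t)) - 1).prod

lemma diffProd_snoc (i : StarIndex) (p : ℕ) :
    diffProd ρ g (i.snoc p) = diffProd ρ g i * (ρ (g p) - 1) := by
  rw [diffProd, StarIndex.snoc, List.ofFn_succ', List.prod_concat]
  simp [diffProd]

lemma diffProd_single (p : ℕ) : diffProd ρ g ⟨0, fun _ => p⟩ = ρ (g p) - 1 := by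
  simp [diffProd]

variable {ρ g}

lemma starSeq_apply (f : X) (i : StarIndex) :
    starSeq ρ g f i = (2 : ℝ)⁻¹ ^ (i.1 + 1) * ‖diffProd ρ g i f‖ := rfl

lemma starSeq_zero (i : StarIndex) : starSeq ρ g (0 : X) i = 0 := by
  simp [starSeq_apply]

lemma starSeq_smul (c : ℂ) (f : X) (i : StarIndex) :
    starSeq ρ g (c • f) i = ‖c‖ * starSeq ρ g f i := by
  simp only [starSeq_apply, map_smul, norm_smul]
  ring

lemma starSeq_add_le (f f' : X) (i : StarIndex) :
    starSeq ρ g (f + f') i ≤ starSeq ρ g f i + starSeq ρ g f' i := by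
  simp only [starSeq_apply, map_add, ← mul_add]
  gcongr
  exact norm_add_le _ _

lemma norm_sub_apply_eq_two_mul_starSeq (f : X) (p : ℕ) :
    ‖(ρ (g p) - 1) f‖ = 2 * starSeq ρ g f ⟨0, fun _ => p⟩ := by
  rw [starSeq_apply, diffProd_single]
  ring

lemma starSeq_apply_le (f : X) (p : ℕ) (i : StarIndex) :
    starSeq ρ g (ρ (g p) f) i ≤ 2 * starSeq ρ g f (i.snoc p) + starSeq ρ g f i := by
  have hsplit : diffProd ρ g i (ρ (g p) f) = diffProd ρ g (i.snoc p) f + diffProd ρ g i f := by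
    simp [diffProd_snoc]
  calc starSeq ρ g (ρ (g p) f) i
      ≤ (2 : ℝ)⁻¹ ^ (i.1 + 1) * (‖diffProd ρ g (i.snoc p) f‖ + ‖diffProd ρ g i f‖) := by
        rw [starSeq_apply, hsplit]
        gcongr
        exact norm_add_le _ _
    _ = 2 * starSeq ρ g f (i.snoc p) + starSeq ρ g f i := by
        simp only [starSeq_apply, StarIndex.snoc, pow_succ]
        ring

lemma norm_le_starNorm (f : X) : ‖f‖ ≤ starNorm ρ g f := le_max_left _ _

lemma starSeq_le_starNorm {f : X} (hf : BddAbove (Set.range (starSeq ρ g f))) (i : StarIndex) :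
    starSeq ρ g f i ≤ starNorm ρ g f :=
  (le_ciSup hf i).trans (le_max_right _ _)

lemma bddAbove_starSeq_and_starNorm_le {f : X} {C : ℝ} (hnorm : ‖f‖ ≤ C)
    (hseq : ∀ i, starSeq ρ g f i ≤ C) :
    BddAbove (Set.range (starSeq ρ g f)) ∧ starNorm ρ g f ≤ C :=
  ⟨⟨C, Set.forall_mem_range.2 hseq⟩, max_le hnorm (ciSup_le hseq)⟩

lemma starNorm_zero : starNorm ρ g (0 : X) = 0 :=
  le_antisymm (bddAbove_starSeq_and_starNorm_le (by simp) fun i => (starSeq_zero i).le).2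
    (norm_zero.symm.trans_le (norm_le_starNorm (0 : X)))

lemma eq_zero_of_starNorm_eq_zero {f : X} (h : starNorm ρ g f = 0) : f = 0 :=
  norm_le_zero_iff.1 (h ▸ norm_le_starNorm f)

lemma starNorm_smul (c : ℂ) (f : X) : starNorm ρ g (c • f) = ‖c‖ * starNorm ρ g f := by
  simp only [starNorm, norm_smul, starSeq_smul, ← Real.mul_iSup_of_nonneg (norm_nonneg c),
    mul_max_of_nonneg _ _ (norm_nonneg c)]

lemma starNorm_add_le {f f' : X} (hf : BddAbove (Set.range (starSeq ρ g f)))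
    (hf' : BddAbove (Set.range (starSeq ρ g f'))) :
    BddAbove (Set.range (starSeq ρ g (f + f'))) ∧
      starNorm ρ g (f + f') ≤ starNorm ρ g f + starNorm ρ g f' :=
  bddAbove_starSeq_and_starNorm_le
    ((norm_add_le f f').trans (add_le_add (norm_le_starNorm f) (norm_le_starNorm f')))
    fun i => (starSeq_add_le f f' i).trans
      (add_le_add (starSeq_le_starNorm hf i) (starSeq_le_starNorm hf' i))

lemma starNorm_apply_le {f : X} (hf : BddAbove (Set.range (starSeq ρ g f))) (p : ℕ) :
    BddAbove (Set.range (starSeq ρ g (ρ (g p) f))) ∧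
      starNorm ρ g (ρ (g p) f) ≤ 3 * starNorm ρ g f := by
  refine bddAbove_starSeq_and_starNorm_le ?_ fun (i : StarIndex) => ?_
  · have hsplit : ρ (g p) f = (ρ (g p) - 1) f + f := by simp
    calc ‖ρ (g p) f‖ ≤ ‖(ρ (g p) - 1) f‖ + ‖f‖ := hsplit ▸ norm_add_le _ _
      _ = 2 * starSeq ρ g f ⟨0, fun _ => p⟩ + ‖f‖ := by
          rw [norm_sub_apply_eq_two_mul_starSeq]
      _ ≤ 2 * starNorm ρ g f + starNorm ρ g f := by
          gcongr
          exacts [starSeq_le_starNorm hf _, norm_le_starNorm f]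
      _ = 3 * starNorm ρ g f := by ring
  · calc starSeq ρ g (ρ (g p) f) i ≤ 2 * starSeq ρ g f (i.snoc p) + starSeq ρ g f i :=
          starSeq_apply_le f p i
      _ ≤ 2 * starNorm ρ g f + starNorm ρ g f := by
          gcongr <;> exact starSeq_le_starNorm hf _
      _ = 3 * starNorm ρ g f := by ring

end StarNorm

/-- on the subspace `X_* = {f : ‖f‖_* < ∞}` (expressed via boundedness of the
family `starSeq`), `‖·‖_*` is a norm, `X_*` is invariant under each `ρ(g_p)`, and
`‖ρ(g_p) f‖_* ≤ 3 ‖f‖_*` for all `p` and all `f ∈ X_*`. -/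
theorem stmt_17 (G X : Type*) [CommGroup G] [NormedAddCommGroup X] [NormedSpace ℂ X]
    (ρ : G →* (X →L[ℂ] X)) (g : ℕ → G) (f f' : X)
    (hf : BddAbove (Set.range (starSeq ρ g f)))
    (hf' : BddAbove (Set.range (starSeq ρ g f'))) :
    0 ≤ starNorm ρ g f ∧
    starNorm ρ g (0 : X) = 0 ∧
    (starNorm ρ g f = 0 → f = 0) ∧
    (∀ c : ℂ, starNorm ρ g (c • f) = ‖c‖ * starNorm ρ g f) ∧
    (BddAbove (Set.range (starSeq ρ g (f + f'))) ∧
      starNorm ρ g (f + f') ≤ starNorm ρ g f + starNorm ρ g f') ∧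
    (∀ p : ℕ, BddAbove (Set.range (starSeq ρ g (ρ (g p) f))) ∧
      starNorm ρ g (ρ (g p) f) ≤ 3 * starNorm ρ g f) :=
  ⟨(norm_nonneg f).trans (norm_le_starNorm f), starNorm_zero, eq_zero_of_starNorm_eq_zero,
    fun c => starNorm_smul c f, starNorm_add_le hf hf', starNorm_apply_le hf⟩
end

section
/- With the same setup as the previous statement (the characters ψ_s built from binary sequences s via the sequence (χ_n)), for any p ≥ 1 and any s, s' ∈ {0,1}^ℕ whose first p coordinates coincide, d(ψ_s, ψ_{s'}) ≤ (7/6)·d(χ_p, conj(χ_p)). Consequently, since d(χ_p, χ̄_p) → 0, for every ε > 0 every ε-separated subset of K = {ψ_s : s ∈ {0,1}^ℕ} for the pseudo-metric d has at most 2^p elements for suitable p, hence is finite; so K is an uncountable set in which every uniformly separated family is finite. -/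
open Filter Topology

/-- The sup pseudo-distance `d(a,b) = sup_k |a(g_k) − b(g_k)|` along the sequence `(g_k)`. -/
noncomputable def dSup {G : Type*} [CommGroup G] (g : ℕ → G) (a b : G →* Circle) : ℝ :=
  ⨆ k : ℕ, ‖(a (g k) : ℂ) - (b (g k) : ℂ)‖

/-- The character `ψ_{(s_1,…,s_n)} = ∏_{j<n} χ_j^{ε_j}` attached to a finite binary string,
where `ε_j = +1` if `s j = false` and `ε_j = −1` (conjugation, i.e. inversion in the
character group) if `s j = true`. -/
noncomputable def psiFin {G : Type*} [CommGroup G] (χ : ℕ → (G →* Circle))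
    (s : ℕ → Bool) (n : ℕ) : G →* Circle :=
  ∏ j ∈ Finset.range n, if s j then (χ j)⁻¹ else χ j

/-!
Multiplication on the circle is an isometry, so the distance between two products of characters
is at most the sum of the distances of their factors. For strings agreeing up to `p` the factors
of index `j ≤ p` coincide and the others differ by at most `d(χ_j, χ̄_j) ≤ 2 d(χ_j, 1)`, so the
hypothesis gives `d(χ_{j+1}, χ̄_{j+1}) ≤ d(χ_j, χ̄_j) / 8`. The tail is then bounded by
`d(χ_p, χ̄_p) / 7 ≤ (7/6) d(χ_p, χ̄_p)`, and the bound passes to the pointwise limits `ψ_s`.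
As `d(χ_p, χ̄_p) → 0`, for each `ε` there is a `p` such that points of `K` with strings agreeing
up to `p` are `ε`-close; an `ε`-separated subset of `K` thus injects into `{0,1}^{p+1}`.
-/

open Finset

namespace Circle

lemma dist_eq_norm (z w : Circle) : dist z w = ‖(z : ℂ) - w‖ := Complex.dist_eq _ _

instance : IsIsometricSMul Circle Circle :=
  ⟨fun c => Isometry.of_dist_eq fun x y => by
    simp only [smul_eq_mul, dist_eq_norm, coe_mul, ← mul_sub, norm_mul, norm_coe, one_mul]⟩

lemma dist_le_two (z w : Circle) : dist z w ≤ 2 := by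
  rw [dist_eq_norm]
  exact (norm_sub_le _ _).trans_eq (by rw [norm_coe, norm_coe]; norm_num)

end Circle

namespace IsIsometricSMul

variable {M : Type*} [PseudoMetricSpace M]

lemma dist_mul_mul_le [CommMonoid M] [IsIsometricSMul M M] (a b c d : M) :
    dist (a * b) (c * d) ≤ dist a c + dist b d :=
  calc dist (a * b) (c * d) ≤ dist (a * b) (c * b) + dist (c * b) (c * d) := dist_triangle ..
    _ = dist a c + dist b d := by rw [dist_mul_right, dist_mul_left]

lemma dist_prod_prod_le [CommMonoid M] [IsIsometricSMul M M] {ι : Type*} (s : Finset ι)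
    (f f' : ι → M) : dist (∏ i ∈ s, f i) (∏ i ∈ s, f' i) ≤ ∑ i ∈ s, dist (f i) (f' i) := by
  classical
  induction s using Finset.induction_on with
  | empty => simp
  | insert i s hi ih =>
    rw [prod_insert hi, prod_insert hi, sum_insert hi]
    exact (dist_mul_mul_le _ _ _ _).trans (by gcongr)

lemma dist_inv_le [Group M] [IsIsometricSMul M M] (a : M) : dist a a⁻¹ ≤ 2 * dist a 1 :=
  calc dist a a⁻¹ ≤ dist a 1 + dist 1 a⁻¹ := dist_triangle ..
    _ = 2 * dist a 1 := by rw [← dist_mul_left a 1 a⁻¹, mul_one, mul_inv_cancel]; ring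

end IsIsometricSMul

section dSup

variable {G : Type*} [CommGroup G] (g : ℕ → G)

lemma dSup_eq_iSup_dist (a b : G →* Circle) : dSup g a b = ⨆ k, dist (a (g k)) (b (g k)) := by
  simp only [dSup, Circle.dist_eq_norm]

lemma dist_le_dSup (a b : G →* Circle) (k : ℕ) : dist (a (g k)) (b (g k)) ≤ dSup g a b := by
  rw [dSup_eq_iSup_dist]
  exact le_ciSup (f := fun k => dist (a (g k)) (b (g k)))
    ⟨2, Set.forall_mem_range.2 fun k => Circle.dist_le_two _ _⟩ k

lemma dSup_nonneg (a b : G →* Circle) : 0 ≤ dSup g a b :=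
  dist_nonneg.trans (dist_le_dSup g a b 0)

lemma dSup_le {a b : G →* Circle} {c : ℝ} (h : ∀ k, dist (a (g k)) (b (g k)) ≤ c) :
    dSup g a b ≤ c := by
  rw [dSup_eq_iSup_dist]
  exact ciSup_le h

lemma dSup_inv_le (a : G →* Circle) : dSup g a a⁻¹ ≤ 2 * dSup g a 1 :=
  dSup_le g fun k => (IsIsometricSMul.dist_inv_le (a (g k))).trans (by
    gcongr
    simpa using dist_le_dSup g a 1 k)

end dSup

lemma psiFin_apply {G : Type*} [CommGroup G] (χ : ℕ → (G →* Circle)) (s : ℕ → Bool) (n : ℕ)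
    (x : G) : psiFin χ s n x = ∏ j ∈ range n, if s j then (χ j x)⁻¹ else χ j x := by
  rw [psiFin, MonoidHom.finsetProd_apply]
  exact prod_congr rfl fun j _ => by cases s j <;> simp

lemma dist_psiFin_le {G : Type*} [CommGroup G] (χ : ℕ → (G →* Circle)) {s s' : ℕ → Bool} {p : ℕ}
    (h : ∀ j ≤ p, s j = s' j) (n : ℕ) (x : G) :
    dist (psiFin χ s n x) (psiFin χ s' n x) ≤ ∑ j ∈ Ico (p + 1) n, dist (χ j x) (χ j x)⁻¹ := by
  have hterm : ∀ j, dist (if s j then (χ j x)⁻¹ else χ j x) (if s' j then (χ j x)⁻¹ else χ j x)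
      ≤ if p < j then dist (χ j x) (χ j x)⁻¹ else 0 := by
    intro j
    by_cases hpj : p < j
    · rw [if_pos hpj]
      cases s j <;> cases s' j <;> simp [dist_comm]
    · rw [if_neg hpj, h j (by omega), dist_self]
  calc dist (psiFin χ s n x) (psiFin χ s' n x)
      ≤ ∑ j ∈ range n, dist (if s j then (χ j x)⁻¹ else χ j x)
          (if s' j then (χ j x)⁻¹ else χ j x) := by
        rw [psiFin_apply, psiFin_apply]
        exact IsIsometricSMul.dist_prod_prod_le _ _ _
    _ ≤ ∑ j ∈ range n, if p < j then dist (χ j x) (χ j x)⁻¹ else 0 := sum_le_sum fun j _ => hterm j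
    _ = ∑ j ∈ Ico (p + 1) n, dist (χ j x) (χ j x)⁻¹ := by
        rw [← sum_filter]
        congr 1
        ext j
        simp only [mem_filter, mem_range, mem_Ico]
        omega

section Geometric

variable {D : ℕ → ℝ} {r : ℝ}

lemma sum_Ico_le_of_forall_le_mul (hr₀ : 0 ≤ r) (hr₁ : r < 1) (hD : ∀ j, D (j + 1) ≤ r * D j)
    {p : ℕ} (hDp : 0 ≤ D p) (n : ℕ) : ∑ j ∈ Ico (p + 1) n, D j ≤ r / (1 - r) * D p :=
  calc ∑ j ∈ Ico (p + 1) n, D j = ∑ k ∈ range (n - (p + 1)), D (p + (k + 1)) := by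
        rw [sum_Ico_eq_sum_range]; simp only [add_assoc, add_comm 1]
    _ ≤ ∑ k ∈ range (n - (p + 1)), r ^ (k + 1) * D p :=
        sum_le_sum fun k _ => le_geom (u := fun i => D (p + i)) hr₀ (k + 1) fun i _ => hD (p + i)
    _ = r * D p * ∑ k ∈ range (n - (p + 1)), r ^ k := by
        rw [mul_sum]; exact sum_congr rfl fun k _ => by ring
    _ ≤ r * D p * (1 / (1 - r)) := by
        gcongr
        have := geom_sum_Ico_le_of_lt_one (m := 0) (n := n - (p + 1)) hr₀ hr₁
        rwa [← range_eq_Ico, pow_zero] at this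
    _ = r / (1 - r) * D p := by ring

lemma tendsto_zero_of_forall_le_mul (hD₀ : ∀ j, 0 ≤ D j) (hr₀ : 0 ≤ r) (hr₁ : r < 1)
    (hD : ∀ j, D (j + 1) ≤ r * D j) : Tendsto D atTop (𝓝 0) := by
  refine squeeze_zero (g := fun n => r ^ n * D 0) hD₀ (fun n => ?_) ?_
  · exact le_geom hr₀ n fun k _ => hD k
  · simpa using (tendsto_pow_atTop_nhds_zero_of_lt_one hr₀ hr₁).mul_const (D 0)

end Geometric

section Characters

variable {G : Type*} [CommGroup G] (g : ℕ → G) (χ : ℕ → (G →* Circle))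

lemma dSup_inv_succ_le
    (hn : ∀ n : ℕ, 1 ≤ n →
      dSup g (χ n) 1 < (4 : ℝ)⁻¹ ^ (n + 1) * dSup g (χ (n - 1)) (χ (n - 1))⁻¹) (j : ℕ) :
    dSup g (χ (j + 1)) (χ (j + 1))⁻¹ ≤ 8⁻¹ * dSup g (χ j) (χ j)⁻¹ := by
  have hj := hn (j + 1) j.succ_pos
  rw [Nat.add_sub_cancel] at hj
  calc dSup g (χ (j + 1)) (χ (j + 1))⁻¹ ≤ 2 * dSup g (χ (j + 1)) 1 := dSup_inv_le g _
    _ ≤ 2 * ((4 : ℝ)⁻¹ ^ 2 * dSup g (χ j) (χ j)⁻¹) := by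
      gcongr
      refine hj.le.trans (mul_le_mul_of_nonneg_right ?_ (dSup_nonneg g _ _))
      exact pow_le_pow_of_le_one (by norm_num) (by norm_num) (by omega)
    _ = 8⁻¹ * dSup g (χ j) (χ j)⁻¹ := by ring

lemma dSup_le_of_tendsto_psiFin {r : ℝ} (hr₀ : 0 ≤ r) (hr₁ : r < 1)
    (hdecay : ∀ j, dSup g (χ (j + 1)) (χ (j + 1))⁻¹ ≤ r * dSup g (χ j) (χ j)⁻¹)
    {s s' : ℕ → Bool} {a a' : G →* Circle}
    (ha : ∀ x, Tendsto (fun n => (psiFin χ s n x : ℂ)) atTop (𝓝 (a x)))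
    (ha' : ∀ x, Tendsto (fun n => (psiFin χ s' n x : ℂ)) atTop (𝓝 (a' x)))
    {p : ℕ} (h : ∀ j ≤ p, s j = s' j) :
    dSup g a a' ≤ r / (1 - r) * dSup g (χ p) (χ p)⁻¹ := by
  refine dSup_le g fun k => le_of_tendsto ((ha (g k)).dist (ha' (g k)))
    (Eventually.of_forall fun n => ?_)
  calc dist (psiFin χ s n (g k) : ℂ) (psiFin χ s' n (g k))
      ≤ ∑ j ∈ Ico (p + 1) n, dSup g (χ j) (χ j)⁻¹ :=
        (dist_psiFin_le χ h n (g k)).trans (sum_le_sum fun j _ => by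
          simpa using dist_le_dSup g (χ j) (χ j)⁻¹ k)
    _ ≤ r / (1 - r) * dSup g (χ p) (χ p)⁻¹ :=
        sum_Ico_le_of_forall_le_mul hr₀ hr₁ hdecay (dSup_nonneg g _ _) n

end Characters

lemma finite_of_separated_of_agree_lt {X : Type*} (d : X → X → ℝ) (ψ : (ℕ → Bool) → X)
    {ε : ℝ} {p : ℕ} (hp : ∀ s s', (∀ j ≤ p, s j = s' j) → d (ψ s) (ψ s') < ε)
    {S : Set X} (hS : S ⊆ Set.range ψ) (hsep : ∀ a ∈ S, ∀ b ∈ S, a ≠ b → ε ≤ d a b) :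
    S.Finite := by
  refine Set.Finite.of_finite_image (f := fun a (j : Fin (p + 1)) => Function.invFun ψ a j)
    (Set.toFinite _) fun a ha b hb hab => ?_
  by_contra hne
  have hlt := hp (Function.invFun ψ a) (Function.invFun ψ b) fun j hj =>
    congrFun hab ⟨j, Nat.lt_succ_of_le hj⟩
  rw [Function.invFun_eq (hS ha), Function.invFun_eq (hS hb)] at hlt
  exact (hsep a ha b hb hne).not_gt hlt

theorem stmt_19_general (G : Type*) [CommGroup G] (g : ℕ → G) (χ : ℕ → (G →* Circle))
    (hn : ∀ n : ℕ, 1 ≤ n →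
      dSup g (χ n) 1 < (4 : ℝ)⁻¹ ^ (n + 1) * dSup g (χ (n - 1)) (χ (n - 1))⁻¹)
    (ψ : (ℕ → Bool) → (G →* Circle))
    (hψ : ∀ (s : ℕ → Bool) (x : G),
      Tendsto (fun n : ℕ => ((psiFin χ s n) x : ℂ)) atTop (nhds ((ψ s x : ℂ)))) :
    (∀ (s s' : ℕ → Bool) (p : ℕ), (∀ j ≤ p, s j = s' j) →
      dSup g (ψ s) (ψ s') ≤ (7 / 6) * dSup g (χ p) (χ p)⁻¹) ∧
    (∀ ε : ℝ, 0 < ε → ∀ S : Set (G →* Circle), S ⊆ Set.range ψ →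
      (∀ a ∈ S, ∀ b ∈ S, a ≠ b → ε ≤ dSup g a b) → S.Finite) := by
  have hdecay := dSup_inv_succ_le g χ hn
  have hclose : ∀ s s' p, (∀ j ≤ p, s j = s' j) →
      dSup g (ψ s) (ψ s') ≤ 7 / 6 * dSup g (χ p) (χ p)⁻¹ := fun s s' p h =>
    (dSup_le_of_tendsto_psiFin g χ (by norm_num) (by norm_num) hdecay (hψ s) (hψ s') h).trans
      (mul_le_mul_of_nonneg_right (by norm_num) (dSup_nonneg g _ _))
  have hlim : Tendsto (fun p => 7 / 6 * dSup g (χ p) (χ p)⁻¹) atTop (𝓝 0) := by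
    simpa using (tendsto_zero_of_forall_le_mul (D := fun p => dSup g (χ p) (χ p)⁻¹)
      (fun j => dSup_nonneg g _ _) (by norm_num) (by norm_num) hdecay).const_mul (7 / 6 : ℝ)
  refine ⟨hclose, fun ε hε S hS hsep => ?_⟩
  obtain ⟨p, hp⟩ := (hlim.eventually (gt_mem_nhds hε)).exists
  exact finite_of_separated_of_agree_lt (dSup g) ψ (fun s s' h => (hclose s s' p h).trans_lt hp)
    hS hsep

/-- in the setup of the construction (non-trivial `χ_n` with `d(χ_0,1) < 1/4`,
`d(χ_n,1) < 4^{-(n+1)} d(χ_{n−1}, conj χ_{n−1})`, and `ψ_s` the pointwise limit of the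
`ψ_{(s_0,…,s_{n−1})}`), if `s` and `s'` agree at all coordinates `≤ p` then
`d(ψ_s, ψ_{s'}) ≤ (7/6) d(χ_p, conj χ_p)`; consequently, for every `ε > 0`, every
`ε`-separated subset of `K = {ψ_s}` is finite. -/
theorem stmt_19 (G : Type*) [CommGroup G] (g : ℕ → G) (χ : ℕ → (G →* Circle))
    (hnt : ∀ n : ℕ, χ n ≠ 1)
    (h0 : dSup g (χ 0) 1 < 1 / 4)
    (hn : ∀ n : ℕ, 1 ≤ n →
      dSup g (χ n) 1 < (4 : ℝ)⁻¹ ^ (n + 1) * dSup g (χ (n - 1)) (χ (n - 1))⁻¹)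
    (ψ : (ℕ → Bool) → (G →* Circle))
    (hψ : ∀ (s : ℕ → Bool) (x : G),
      Tendsto (fun n : ℕ => ((psiFin χ s n) x : ℂ)) atTop (nhds ((ψ s x : ℂ)))) :
    (∀ (s s' : ℕ → Bool) (p : ℕ), (∀ j ≤ p, s j = s' j) →
      dSup g (ψ s) (ψ s') ≤ (7 / 6) * dSup g (χ p) (χ p)⁻¹) ∧
    (∀ ε : ℝ, 0 < ε → ∀ S : Set (G →* Circle), S ⊆ Set.range ψ →
      (∀ a ∈ S, ∀ b ∈ S, a ≠ b → ε ≤ dSup g a b) → S.Finite) :=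
  stmt_19_general G g χ hn ψ hψ
end
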